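/- Let 0 < μ < L, Q = L/μ > 1, α = 1/L, β = (√Q − 1)/(√Q + 1), and B(μ) = [[1 − α(1+β)μ, β²], [−αμ, β]]. Then B(μ) = V J V^{-1}, where V = [[√Q(√Q − 1)/(√Q + 1), Q], [−1, 0]] (which is invertible since det V = Q ≠ 0) and J = [[r, 1], [0, r]] with r = (√Q − 1)/√Q; i.e., J is a single 2×2 Jordan block with eigenvalue r. -/
import Mathlib


open Matrix

/-- The 2×2 matrix `B(λ)` from the analysis of Nesterov's method. -/
noncomputable def Bmat (α β lam : ℝ) : Matrix (Fin 2) (Fin 2) ℝ :=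
  !![1 - α * (1 + β) * lam, β ^ 2; -(α * lam), β]

/-- With `α = 1/L`, `β = (√Q−1)/(√Q+1)`, the matrix `B(μ)` has Jordan
decomposition `B(μ) = V J V⁻¹` with `V = [[√Q(√Q−1)/(√Q+1), Q], [−1, 0]]` (invertible
since `det V = Q ≠ 0`) and `J = [[r, 1], [0, r]]` a single Jordan block with eigenvalue
`r = (√Q−1)/√Q`. -/
theorem stmt16 (μ L : ℝ) (hμ : 0 < μ) (hμL : μ < L)
    (Q : ℝ) (hQ : Q = L / μ) (hQ1 : 1 < Q)
    (α β r : ℝ) (hα : α = 1 / L) (hβ : β = (Real.sqrt Q - 1) / (Real.sqrt Q + 1))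
    (hr : r = (Real.sqrt Q - 1) / Real.sqrt Q)
    (V J : Matrix (Fin 2) (Fin 2) ℝ)
    (hV : V = !![Real.sqrt Q * (Real.sqrt Q - 1) / (Real.sqrt Q + 1), Q; -1, 0])
    (hJ : J = !![r, 1; 0, r]) :
    V.det = Q ∧ Q ≠ 0 ∧ Bmat α β μ = V * J * V⁻¹ := by
  have hQ0 : (0:ℝ) < Q := lt_trans one_pos hQ1
  set s := Real.sqrt Q with hs
  have hs1 : 1 < s := by
    rw [hs]
    nlinarith [Real.sq_sqrt hQ0.le, Real.sqrt_nonneg Q]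
  have hs2 : s ^ 2 = Q := Real.sq_sqrt hQ0.le
  have hs0 : s ≠ 0 := by linarith
  have hsp1 : s + 1 ≠ 0 := by linarith
  have hL0 : L ≠ 0 := by linarith
  have hμ0 : μ ≠ 0 := ne_of_gt hμ
  have hαμ : α * μ = 1 / Q := by
    rw [hα, hQ]; field_simp
  have hdet : V.det = Q := by
    rw [hV, Matrix.det_fin_two_of]; ring
  have hQne : Q ≠ 0 := ne_of_gt hQ0
  refine ⟨hdet, hQne, ?_⟩
  have hVinv : IsUnit V.det := by rw [hdet]; exact (isUnit_iff_ne_zero).2 hQne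
  have hα' : α = 1 / (s ^ 2 * μ) := by
    rw [hα, hs2, hQ]; field_simp
  have hV' : V = !![s * (s - 1) / (s + 1), s ^ 2; -1, 0] := by rw [hV, hs2]
  have key : Bmat α β μ * V = V * J := by
    rw [hV', hJ, hβ, hr, Bmat, hα']
    ext i j
    fin_cases i <;> fin_cases j <;>
      simp [Matrix.mul_apply, Fin.sum_univ_two] <;>
      field_simp <;> ring
  calc Bmat α β μ = Bmat α β μ * V * V⁻¹ := by
        rw [Matrix.mul_nonsing_inv_cancel_right _ _ hVinv]
    _ = V * J * V⁻¹ := by rw [key]
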